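/- arXiv:2401.00598 — 4 statements merged into one kernel-verified Lean document; each statement's English description precedes it below -/
import Mathlib

section
/- Let X and Y be compact Hausdorff spaces, let π : Y → X be an irreducible continuous surjection, and let α : C(X) → C(Y) be given by α(f) = f ∘ π. Then for every regular ideal J of C(X), the ideal α(J)^⊥⊥ is a regular ideal of C(Y), the map Υ(J) = α(J)^⊥⊥ is a bijection from the set of regular ideals of C(X) onto the set of regular ideals of C(Y), its inverse is the map Ω(K) = α⁻¹(K) (in particular α⁻¹(K) is a regular ideal of C(X) for every regular ideal K of C(Y)), and Υ preserves the Boolean operations: Υ(J₁ ∩ J₂) = Υ(J₁) ∩ Υ(J₂), Υ((J₁ ∪ J₂)^⊥⊥) = (Υ(J₁) ∪ Υ(J₂))^⊥⊥, and Υ(J^⊥) = Υ(J)^⊥. -/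
open Set Topology


section TopoAux

variable {Z : Type*} [TopologicalSpace Z]

lemma aux_icic (A : Set Z) :
    interior (closure (interior (closure A))) = interior (closure A) := by
  apply subset_antisymm
  · exact interior_mono ((closure_mono interior_subset).trans closure_closure.subset)
  · exact interior_maximal subset_closure isOpen_interior

lemma aux_clicl {A : Set Z} (hA : IsOpen A) :
    closure (interior (closure A)) = closure A := by
  apply subset_antisymm
  · exact (closure_mono interior_subset).trans closure_closure.subset
  · exact closure_mono (interior_maximal subset_closure hA)

lemma aux_icinter {A B : Set Z} (hA : IsOpen A) (hB : IsOpen B) :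
    interior (closure (A ∩ B)) = interior (closure A) ∩ interior (closure B) := by
  apply subset_antisymm
  · exact subset_inter (interior_mono (closure_mono inter_subset_left))
      (interior_mono (closure_mono inter_subset_right))
  · set O := interior (closure A) ∩ interior (closure B) with hO
    have hOo : IsOpen O := isOpen_interior.inter isOpen_interior
    have c1 : O ⊆ closure (O ∩ A) := fun x hx => hOo.inter_closure ⟨hx, interior_subset hx.1⟩
    have c2 : O ∩ A ⊆ closure ((O ∩ A) ∩ B) := fun x hx =>
      (hOo.inter hA).inter_closure ⟨hx, interior_subset hx.1.2⟩
    have c3 : closure ((O ∩ A) ∩ B) ⊆ closure (A ∩ B) :=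
      closure_mono (fun x hx => ⟨hx.1.2, hx.2⟩)
    have : O ⊆ closure (A ∩ B) := by
      refine c1.trans ?_
      calc closure (O ∩ A) ⊆ closure (closure ((O ∩ A) ∩ B)) := closure_mono c2
        _ = closure ((O ∩ A) ∩ B) := closure_closure
        _ ⊆ closure (A ∩ B) := c3
    exact interior_maximal this hOo

end TopoAux

section Irr

variable {X Y : Type*} [TopologicalSpace X] [TopologicalSpace Y]

/-- `W♯ = (π(Wᶜ))ᶜ`. -/
def sharpSet (π : Y → X) (W : Set Y) : Set X := (π '' Wᶜ)ᶜ

/-- `U* = int cl π⁻¹(U)`. -/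
def starSet (π : Y → X) (U : Set X) : Set Y := interior (closure (π ⁻¹' U))

variable {π : Y → X}

lemma starSet_isOpen (U : Set X) : IsOpen (starSet π U) := isOpen_interior

lemma starSet_regular (U : Set X) :
    interior (closure (starSet π U)) = starSet π U := aux_icic _

lemma preimage_sharp_subset (W : Set Y) : π ⁻¹' sharpSet π W ⊆ W := by
  intro y hy
  by_contra h
  exact hy ⟨y, h, rfl⟩

lemma sharp_open (hcl : IsClosedMap π) {W : Set Y} (hW : IsOpen W) :
    IsOpen (sharpSet π W) :=
  isOpen_compl_iff.mpr (hcl _ hW.isClosed_compl)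

lemma sharp_mono {W W' : Set Y} (h : W ⊆ W') : sharpSet π W ⊆ sharpSet π W' :=
  compl_subset_compl.mpr (image_mono (compl_subset_compl.mpr h))

lemma sharp_nonempty
    (hirr : ∀ F : Set Y, IsClosed F → π '' F = Set.univ → F = Set.univ)
    {W : Set Y} (hW : IsOpen W) (hne : W.Nonempty) : (sharpSet π W).Nonempty := by
  rw [Set.nonempty_iff_ne_empty]
  intro h
  have h1 : π '' Wᶜ = univ := by
    have := compl_empty_iff.mp h
    simpa [sharpSet] using this
  have h2 := hirr Wᶜ hW.isClosed_compl h1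
  rw [compl_univ_iff] at h2
  exact hne.ne_empty h2

lemma star_aux (hc : Continuous π) (hcl : IsClosedMap π) (hs : Function.Surjective π)
    (hirr : ∀ F : Set Y, IsClosed F → π '' F = Set.univ → F = Set.univ)
    {U : Set X} (hU : IsOpen U) :
    interior (π ⁻¹' closure U) ⊆ closure (π ⁻¹' U) := by
  intro y hy
  by_contra hyc
  set V := interior (π ⁻¹' closure U) ∩ (closure (π ⁻¹' U))ᶜ with hV
  have hVo : IsOpen V := isOpen_interior.inter isClosed_closure.isOpen_compl
  obtain ⟨x, hx⟩ := sharp_nonempty hirr hVo ⟨y, hy, hyc⟩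
  obtain ⟨z, rfl⟩ := hs x
  have hzV : z ∈ V := preimage_sharp_subset V hx
  have h1 : π z ∈ closure U := mem_preimage.mp (interior_subset hzV.1)
  have h2 : closure U ⊆ π '' Vᶜ := by
    apply closure_minimal _ (hcl _ hVo.isClosed_compl)
    intro x' hx'
    obtain ⟨w, rfl⟩ := hs x'
    refine ⟨w, fun hwV => hwV.2 (subset_closure hx'), rfl⟩
  exact hx (h2 h1)

lemma star_eq (hc : Continuous π) (hcl : IsClosedMap π) (hs : Function.Surjective π)
    (hirr : ∀ F : Set Y, IsClosed F → π '' F = Set.univ → F = Set.univ)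
    {U : Set X} (hU : IsOpen U) :
    starSet π U = interior (π ⁻¹' closure U) := by
  apply subset_antisymm
  · exact interior_mono (closure_minimal (preimage_mono subset_closure)
      (isClosed_closure.preimage hc))
  · exact interior_maximal (star_aux hc hcl hs hirr hU) isOpen_interior

lemma closure_star (hc : Continuous π) {U : Set X} (hU : IsOpen U) :
    closure (starSet π U) = closure (π ⁻¹' U) :=
  aux_clicl (hU.preimage hc)

lemma star_icl (hc : Continuous π) (hcl : IsClosedMap π) (hs : Function.Surjective π)
    (hirr : ∀ F : Set Y, IsClosed F → π '' F = Set.univ → F = Set.univ)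
    {A : Set X} (hA : IsOpen A) :
    starSet π (interior (closure A)) = starSet π A := by
  have key : closure (π ⁻¹' interior (closure A)) = closure (π ⁻¹' A) := by
    apply subset_antisymm
    · apply closure_minimal _ isClosed_closure
      have h1 : π ⁻¹' interior (closure A) ⊆ interior (π ⁻¹' closure A) :=
        interior_maximal (preimage_mono interior_subset) (isOpen_interior.preimage hc)
      exact h1.trans (star_aux hc hcl hs hirr hA)
    · exact closure_mono (preimage_mono (interior_maximal subset_closure hA))
  unfold starSet
  rw [key]

lemma sharp_star (hc : Continuous π) (hcl : IsClosedMap π) (hs : Function.Surjective π)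
    (hirr : ∀ F : Set Y, IsClosed F → π '' F = Set.univ → F = Set.univ)
    {U : Set X} (hU : IsOpen U) (hreg : interior (closure U) = U) :
    sharpSet π (starSet π U) = U := by
  apply subset_antisymm
  · have hsub : sharpSet π (starSet π U) ⊆ closure U := by
      by_contra hcon
      rw [Set.not_subset] at hcon
      obtain ⟨x, hx1, hx2⟩ := hcon
      set V := sharpSet π (starSet π U) ∩ (closure U)ᶜ with hVdef
      obtain ⟨z, rfl⟩ : ∃ z, π z = x := hs x
      have hz0 : π z ∈ V := ⟨hx1, hx2⟩
      have hz1 : z ∈ starSet π U := preimage_sharp_subset _ hz0.1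
      have hz2 : z ∈ closure (π ⁻¹' U) := interior_subset hz1
      have hz3 : z ∈ π ⁻¹' (closure U)ᶜ := hz0.2
      obtain ⟨w, hw1, hw2⟩ := mem_closure_iff.mp hz2 _
        (isClosed_closure.isOpen_compl.preimage hc) hz3
      exact hw1 (subset_closure hw2)
    intro x hx
    rw [← hreg]
    exact interior_maximal hsub (sharp_open hcl (starSet_isOpen U)) hx
  · intro x hxU hmem
    obtain ⟨z, hz, hzx⟩ := hmem
    apply hz
    have hzU : z ∈ π ⁻¹' U := by rw [mem_preimage, hzx]; exact hxU
    exact interior_maximal subset_closure (hU.preimage hc) hzU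

lemma star_sharp (hc : Continuous π) (hcl : IsClosedMap π) (hs : Function.Surjective π)
    (hirr : ∀ F : Set Y, IsClosed F → π '' F = Set.univ → F = Set.univ)
    {W : Set Y} (hW : IsOpen W) (hreg : interior (closure W) = W) :
    starSet π (sharpSet π W) = W := by
  apply subset_antisymm
  · calc starSet π (sharpSet π W) ⊆ interior (closure W) :=
        interior_mono (closure_mono (preimage_sharp_subset W))
      _ = W := hreg
  · have hdense : W ⊆ closure (π ⁻¹' (sharpSet π W)) := by
      intro y hy
      rw [mem_closure_iff]
      intro O hO hyO
      obtain ⟨x, hx⟩ := sharp_nonempty hirr (hO.inter hW) ⟨y, hyO, hy⟩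
      obtain ⟨z, rfl⟩ := hs x
      have hz : z ∈ O ∩ W := preimage_sharp_subset _ hx
      exact ⟨z, hz.1, sharp_mono inter_subset_right hx⟩
    exact interior_maximal hdense hW

lemma sharp_regular (hc : Continuous π) (hcl : IsClosedMap π) (hs : Function.Surjective π)
    (hirr : ∀ F : Set Y, IsClosed F → π '' F = Set.univ → F = Set.univ)
    {W : Set Y} (hW : IsOpen W) (hreg : interior (closure W) = W) :
    interior (closure (sharpSet π W)) = sharpSet π W := by
  have h1 : starSet π (interior (closure (sharpSet π W))) = W := by
    rw [star_icl hc hcl hs hirr (sharp_open hcl hW), star_sharp hc hcl hs hirr hW hreg]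
  have h2 := sharp_star hc hcl hs hirr (isOpen_interior
    (s := closure (sharpSet π W))) (aux_icic (sharpSet π W))
  rw [h1] at h2
  exact h2.symm

lemma star_compl (hc : Continuous π) (hcl : IsClosedMap π) (hs : Function.Surjective π)
    (hirr : ∀ F : Set Y, IsClosed F → π '' F = Set.univ → F = Set.univ)
    {U : Set X} (hU : IsOpen U) (hreg : interior (closure U) = U) :
    starSet π ((closure U)ᶜ) = (closure (starSet π U))ᶜ := by
  rw [star_eq hc hcl hs hirr isClosed_closure.isOpen_compl, closure_compl, hreg,
    preimage_compl, interior_compl, closure_star hc hU]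

lemma star_inter (hc : Continuous π) {U₁ U₂ : Set X} (h1 : IsOpen U₁) (h2 : IsOpen U₂) :
    starSet π (U₁ ∩ U₂) = starSet π U₁ ∩ starSet π U₂ := by
  unfold starSet
  rw [preimage_inter]
  exact aux_icinter (h1.preimage hc) (h2.preimage hc)

lemma star_union (hc : Continuous π) {U₁ U₂ : Set X} (h1 : IsOpen U₁) (h2 : IsOpen U₂) :
    starSet π (U₁ ∪ U₂) = interior (closure (starSet π U₁ ∪ starSet π U₂)) := by
  have key : closure (π ⁻¹' (U₁ ∪ U₂)) = closure (starSet π U₁ ∪ starSet π U₂) := by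
    rw [preimage_union, closure_union, ← closure_star hc h1, ← closure_star hc h2,
      ← closure_union]
  show interior (closure (π ⁻¹' (U₁ ∪ U₂))) = _
  rw [key]

end Irr



/-- The annihilator `S^⊥ = {f : f·g = 0 for all g ∈ S}` of a subset of a commutative
ring, as an ideal. -/
noncomputable def setAnn {A : Type*} [CommRing A] (S : Set A) : Ideal A where
  carrier := {f | ∀ g ∈ S, f * g = 0}
  add_mem' := by
    intro a b ha hb g hg
    rw [add_mul, ha g hg, hb g hg, add_zero]
  zero_mem' := by intro g hg; rw [zero_mul]
  smul_mem' := by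
    intro c x hx g hg
    rw [smul_eq_mul, mul_assoc, hx g hg, mul_zero]

/-- An ideal is regular if it equals its double annihilator. -/
def IsRegularIdeal {A : Type*} [CommRing A] (J : Ideal A) : Prop :=
  setAnn (setAnn (J : Set A) : Set A) = J

/-- The open support `supp(J) = {x : f x ≠ 0 for some f ∈ J}` of an ideal of `C(X, ℂ)`. -/
def suppIdeal {X : Type*} [TopologicalSpace X] (J : Ideal C(X, ℂ)) : Set X :=
  {x | ∃ f ∈ J, f x ≠ 0}

/-- For `α : C(X, ℂ) → C(Y, ℂ)`, `α(f) = f ∘ π`, the preimage ideal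
`α⁻¹(K) = {f : f ∘ π ∈ K}` of an ideal `K` of `C(Y, ℂ)`. -/
noncomputable def alphaPre {X Y : Type*} [TopologicalSpace X] [TopologicalSpace Y]
    (π : C(Y, X)) (K : Ideal C(Y, ℂ)) : Ideal C(X, ℂ) where
  carrier := {f | f.comp π ∈ K}
  add_mem' := by
    intro a b ha hb
    simp only [Set.mem_setOf_eq, ContinuousMap.add_comp] at *
    exact K.add_mem ha hb
  zero_mem' := by
    simp only [Set.mem_setOf_eq, ContinuousMap.zero_comp]
    exact K.zero_mem
  smul_mem' := by
    intro c f hf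
    simp only [smul_eq_mul, Set.mem_setOf_eq, ContinuousMap.mul_comp] at *
    exact K.mul_mem_left _ hf

/-- For `α : C(X, ℂ) → C(Y, ℂ)`, `α(f) = f ∘ π`, the ideal `Υ(J) = α(J)^⊥⊥` of
`C(Y, ℂ)` associated to an ideal `J` of `C(X, ℂ)`. -/
noncomputable def Upsilon {X Y : Type*} [TopologicalSpace X] [TopologicalSpace Y]
    (π : C(Y, X)) (J : Ideal C(X, ℂ)) : Ideal C(Y, ℂ) :=
  setAnn ((setAnn ((fun f : C(X, ℂ) => f.comp π) '' (J : Set C(X, ℂ))) : Ideal C(Y, ℂ)) :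
    Set C(Y, ℂ))


noncomputable section Dict

variable {X Y : Type*} [TopologicalSpace X] [TopologicalSpace Y]

/-- The ideal of functions vanishing off `U`. -/
def idealOf (U : Set X) : Ideal C(X, ℂ) where
  carrier := {f | ∀ x ∉ U, f x = 0}
  add_mem' := by
    intro a b ha hb x hx
    rw [ContinuousMap.add_apply, ha x hx, hb x hx, add_zero]
  zero_mem' := by intro x hx; rfl
  smul_mem' := by
    intro c f hf x hx
    rw [smul_eq_mul, ContinuousMap.mul_apply, hf x hx, mul_zero]

lemma mem_idealOf {U : Set X} {f : C(X, ℂ)} : f ∈ idealOf U ↔ ∀ x ∉ U, f x = 0 := Iff.rfl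

lemma mem_setAnn {A : Type*} [CommRing A] {S : Set A} {f : A} :
    f ∈ setAnn S ↔ ∀ g ∈ S, f * g = 0 := Iff.rfl

/-- The open support of a set of functions. -/
def mySupp (S : Set C(X, ℂ)) : Set X := {x | ∃ f ∈ S, f x ≠ 0}

lemma mySupp_union (S T : Set C(X, ℂ)) : mySupp (S ∪ T) = mySupp S ∪ mySupp T := by
  ext x
  constructor
  · rintro ⟨f, hf | hf, hfx⟩
    · exact Or.inl ⟨f, hf, hfx⟩
    · exact Or.inr ⟨f, hf, hfx⟩
  · rintro (⟨f, hf, hfx⟩ | ⟨f, hf, hfx⟩)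
    · exact ⟨f, Or.inl hf, hfx⟩
    · exact ⟨f, Or.inr hf, hfx⟩

lemma setAnn_eq_idealOf (S : Set C(X, ℂ)) :
    setAnn S = idealOf ((closure (mySupp S))ᶜ) := by
  ext f
  rw [mem_setAnn, mem_idealOf]
  constructor
  · intro hf x hx
    rw [Set.notMem_compl_iff] at hx
    have h0 : mySupp S ⊆ ⇑f ⁻¹' {0} := by
      rintro z ⟨g, hg, hgz⟩
      have h2 : (f * g) z = 0 := by rw [hf g hg]; rfl
      rw [ContinuousMap.mul_apply] at h2
      simpa using Or.resolve_right (mul_eq_zero.mp h2) hgz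
    have hcl : closure (mySupp S) ⊆ ⇑f ⁻¹' {0} :=
      closure_minimal h0 (isClosed_singleton.preimage f.continuous)
    simpa using hcl hx
  · intro hf g hg
    ext z
    rw [ContinuousMap.mul_apply, ContinuousMap.zero_apply]
    by_cases hz : g z = 0
    · rw [hz, mul_zero]
    · have hmem : z ∈ closure (mySupp S) := subset_closure ⟨g, hg, hz⟩
      rw [hf z (Set.notMem_compl_iff.mpr hmem), zero_mul]

variable [CompactSpace X] [T2Space X]

lemma mySupp_idealOf {U : Set X} (hU : IsOpen U) :
    mySupp ((idealOf U : Ideal C(X, ℂ)) : Set C(X, ℂ)) = U := by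
  apply subset_antisymm
  · rintro x ⟨f, hf, hfx⟩
    by_contra hx
    exact hfx (hf x hx)
  · intro x hx
    obtain ⟨f, hf0, hf1, -⟩ := exists_continuous_zero_one_of_isClosed hU.isClosed_compl
      isClosed_singleton (Set.disjoint_singleton_right.mpr (fun h => h hx))
    refine ⟨(⟨Complex.ofReal, Complex.continuous_ofReal⟩ : C(ℝ, ℂ)).comp f, ?_, ?_⟩
    · intro x' hx'
      show Complex.ofReal (f x') = 0
      have := hf0 (hx' : x' ∈ Uᶜ)
      simp only [Pi.zero_apply] at this
      rw [this, Complex.ofReal_zero]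
    · show Complex.ofReal (f x) ≠ 0
      have := hf1 (mem_singleton x)
      simp only [Pi.one_apply] at this
      rw [this, Complex.ofReal_one]
      exact one_ne_zero

lemma idealOf_inj {U V : Set X} (hU : IsOpen U) (hV : IsOpen V)
    (h : idealOf U = idealOf V) : U = V := by
  rw [← mySupp_idealOf hU, ← mySupp_idealOf hV, h]

lemma setAnn_idealOf {U : Set X} (hU : IsOpen U) :
    setAnn ((idealOf U : Ideal C(X, ℂ)) : Set C(X, ℂ)) = idealOf ((closure U)ᶜ) := by
  rw [setAnn_eq_idealOf, mySupp_idealOf hU]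

lemma idealOf_inf (U V : Set X) : idealOf U ⊓ idealOf V = idealOf (U ∩ V) := by
  ext f
  rw [Submodule.mem_inf, mem_idealOf, mem_idealOf, mem_idealOf]
  constructor
  · rintro ⟨h1, h2⟩ x hx
    by_cases hxU : x ∈ U
    · exact h2 x (fun hxV => hx ⟨hxU, hxV⟩)
    · exact h1 x hxU
  · intro h
    exact ⟨fun x hx => h x (fun hh => hx hh.1), fun x hx => h x (fun hh => hx hh.2)⟩

end Dict



section Main

variable {X Y : Type*} [TopologicalSpace X] [TopologicalSpace Y]
  [CompactSpace X] [T2Space X] [CompactSpace Y] [T2Space Y]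

lemma mySupp_image (π : C(Y, X)) (S : Set C(X, ℂ)) :
    mySupp ((fun f : C(X, ℂ) => f.comp π) '' S) = ⇑π ⁻¹' mySupp S := by
  ext y
  constructor
  · rintro ⟨g, ⟨f, hf, rfl⟩, hgy⟩
    exact ⟨f, hf, hgy⟩
  · rintro ⟨f, hf, hfy⟩
    exact ⟨f.comp π, ⟨f, hf, rfl⟩, hfy⟩

lemma Upsilon_idealOf (π : C(Y, X)) {U : Set X} (hU : IsOpen U) :
    Upsilon π (idealOf U) = idealOf (starSet ⇑π U) := by
  have h1 : setAnn ((fun f : C(X, ℂ) => f.comp π) '' ((idealOf U : Ideal C(X, ℂ)) :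
      Set C(X, ℂ))) = idealOf ((closure (⇑π ⁻¹' U))ᶜ) := by
    rw [setAnn_eq_idealOf, mySupp_image, mySupp_idealOf hU]
  rw [Upsilon, h1, setAnn_idealOf isClosed_closure.isOpen_compl, closure_compl, compl_compl]
  rfl

lemma alphaPre_idealOf (π : C(Y, X)) (W : Set Y) :
    alphaPre π (idealOf W) = idealOf (sharpSet ⇑π W) := by
  ext f
  have hmem : f ∈ alphaPre π (idealOf W) ↔ ∀ y ∉ W, f (π y) = 0 := Iff.rfl
  rw [hmem, mem_idealOf]
  constructor
  · intro hf x hx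
    rw [sharpSet, Set.notMem_compl_iff] at hx
    obtain ⟨y, hy, rfl⟩ := hx
    exact hf y hy
  · intro hf y hy
    exact hf (π y) (fun h => h ⟨y, hy, rfl⟩)

lemma isRegular_idealOf {U : Set X} (hU : IsOpen U)
    (hreg : interior (closure U) = U) : IsRegularIdeal (idealOf U) := by
  unfold IsRegularIdeal
  rw [setAnn_idealOf hU, setAnn_idealOf isClosed_closure.isOpen_compl, closure_compl,
    compl_compl, hreg]

lemma exists_of_regular {J : Ideal C(X, ℂ)} (hJ : IsRegularIdeal J) :
    ∃ U : Set X, IsOpen U ∧ interior (closure U) = U ∧ J = idealOf U := by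
  refine ⟨interior (closure (mySupp (J : Set C(X, ℂ)))), isOpen_interior, aux_icic _, ?_⟩
  conv_lhs => rw [← hJ]
  rw [setAnn_eq_idealOf (J : Set C(X, ℂ)), setAnn_idealOf isClosed_closure.isOpen_compl,
    closure_compl, compl_compl]

end Main

/-- Let `π : Y → X` be an irreducible continuous surjection of compact Hausdorff spaces
and `α : C(X) → C(Y)`, `α(f) = f ∘ π`.  Then `Υ(J) = α(J)^⊥⊥` maps regular ideals of
`C(X)` to regular ideals of `C(Y)`, is a bijection between the regular ideals with
inverse `Ω(K) = α⁻¹(K)` (which in particular maps regular ideals to regular ideals), and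
`Υ` preserves the Boolean operations `∩`, `(· ∪ ·)^⊥⊥` and `(·)^⊥`. -/
theorem stmt1 {X Y : Type*} [TopologicalSpace X] [CompactSpace X] [T2Space X]
    [TopologicalSpace Y] [CompactSpace Y] [T2Space Y]
    (π : Y → X) (hπc : Continuous π) (hπs : Function.Surjective π)
    (hirr : ∀ F : Set Y, IsClosed F → π '' F = Set.univ → F = Set.univ) :
    (∀ J : Ideal C(X, ℂ), IsRegularIdeal J → IsRegularIdeal (Upsilon ⟨π, hπc⟩ J)) ∧
    (∀ K : Ideal C(Y, ℂ), IsRegularIdeal K → IsRegularIdeal (alphaPre ⟨π, hπc⟩ K)) ∧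
    (∀ J : Ideal C(X, ℂ), IsRegularIdeal J → alphaPre ⟨π, hπc⟩ (Upsilon ⟨π, hπc⟩ J) = J) ∧
    (∀ K : Ideal C(Y, ℂ), IsRegularIdeal K → Upsilon ⟨π, hπc⟩ (alphaPre ⟨π, hπc⟩ K) = K) ∧
    (∀ J₁ J₂ : Ideal C(X, ℂ), IsRegularIdeal J₁ → IsRegularIdeal J₂ →
      Upsilon ⟨π, hπc⟩ (J₁ ⊓ J₂) = Upsilon ⟨π, hπc⟩ J₁ ⊓ Upsilon ⟨π, hπc⟩ J₂) ∧
    (∀ J₁ J₂ : Ideal C(X, ℂ), IsRegularIdeal J₁ → IsRegularIdeal J₂ →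
      Upsilon ⟨π, hπc⟩
          (setAnn ((setAnn ((J₁ : Set C(X, ℂ)) ∪ (J₂ : Set C(X, ℂ))) : Ideal C(X, ℂ)) :
            Set C(X, ℂ)))
        = setAnn ((setAnn (((Upsilon ⟨π, hπc⟩ J₁ : Ideal C(Y, ℂ)) : Set C(Y, ℂ)) ∪
            ((Upsilon ⟨π, hπc⟩ J₂ : Ideal C(Y, ℂ)) : Set C(Y, ℂ))) : Ideal C(Y, ℂ)) :
            Set C(Y, ℂ))) ∧
    (∀ J : Ideal C(X, ℂ), IsRegularIdeal J →
      Upsilon ⟨π, hπc⟩ (setAnn (J : Set C(X, ℂ)))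
        = setAnn ((Upsilon ⟨π, hπc⟩ J : Ideal C(Y, ℂ)) : Set C(Y, ℂ))) := by
  set π' : C(Y, X) := ⟨π, hπc⟩ with hπ'
  have hc : Continuous (⇑π') := hπc
  have hs : Function.Surjective (⇑π') := hπs
  have hirr' : ∀ F : Set Y, IsClosed F → ⇑π' '' F = Set.univ → F = Set.univ := hirr
  have hcl : IsClosedMap (⇑π') := hc.isClosedMap
  refine ⟨?_, ?_, ?_, ?_, ?_, ?_, ?_⟩
  · intro J hJ
    obtain ⟨U, hU, hreg, rfl⟩ := exists_of_regular hJ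
    rw [Upsilon_idealOf π' hU]
    exact isRegular_idealOf (starSet_isOpen U) (starSet_regular U)
  · intro K hK
    obtain ⟨W, hW, hreg, rfl⟩ := exists_of_regular hK
    rw [alphaPre_idealOf π' W]
    exact isRegular_idealOf (sharp_open hcl hW) (sharp_regular hc hcl hs hirr' hW hreg)
  · intro J hJ
    obtain ⟨U, hU, hreg, rfl⟩ := exists_of_regular hJ
    rw [Upsilon_idealOf π' hU, alphaPre_idealOf π' _,
      sharp_star hc hcl hs hirr' hU hreg]
  · intro K hK
    obtain ⟨W, hW, hreg, rfl⟩ := exists_of_regular hK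
    rw [alphaPre_idealOf π' W, Upsilon_idealOf π' (sharp_open hcl hW),
      star_sharp hc hcl hs hirr' hW hreg]
  · intro J₁ J₂ hJ₁ hJ₂
    obtain ⟨U₁, hU₁, hreg₁, rfl⟩ := exists_of_regular hJ₁
    obtain ⟨U₂, hU₂, hreg₂, rfl⟩ := exists_of_regular hJ₂
    rw [idealOf_inf, Upsilon_idealOf π' (hU₁.inter hU₂), star_inter hc hU₁ hU₂,
      ← idealOf_inf, Upsilon_idealOf π' hU₁, Upsilon_idealOf π' hU₂]
  · intro J₁ J₂ hJ₁ hJ₂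
    obtain ⟨U₁, hU₁, hreg₁, rfl⟩ := exists_of_regular hJ₁
    obtain ⟨U₂, hU₂, hreg₂, rfl⟩ := exists_of_regular hJ₂
    have hu : setAnn (((idealOf U₁ : Ideal C(X, ℂ)) : Set C(X, ℂ)) ∪
        ((idealOf U₂ : Ideal C(X, ℂ)) : Set C(X, ℂ))) =
        idealOf ((closure (U₁ ∪ U₂))ᶜ) := by
      rw [setAnn_eq_idealOf, mySupp_union, mySupp_idealOf hU₁, mySupp_idealOf hU₂]
    have hv : setAnn (((idealOf (starSet ⇑π' U₁) : Ideal C(Y, ℂ)) : Set C(Y, ℂ)) ∪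
        ((idealOf (starSet ⇑π' U₂) : Ideal C(Y, ℂ)) : Set C(Y, ℂ))) =
        idealOf ((closure (starSet ⇑π' U₁ ∪ starSet ⇑π' U₂))ᶜ) := by
      rw [setAnn_eq_idealOf, mySupp_union, mySupp_idealOf (starSet_isOpen U₁),
        mySupp_idealOf (starSet_isOpen U₂)]
    rw [hu, setAnn_idealOf isClosed_closure.isOpen_compl, closure_compl, compl_compl,
      Upsilon_idealOf π' isOpen_interior, star_icl hc hcl hs hirr' (hU₁.union hU₂),
      star_union hc hU₁ hU₂, Upsilon_idealOf π' hU₁, Upsilon_idealOf π' hU₂, hv,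
      setAnn_idealOf isClosed_closure.isOpen_compl, closure_compl, compl_compl]
  · intro J hJ
    obtain ⟨U, hU, hreg, rfl⟩ := exists_of_regular hJ
    rw [setAnn_idealOf hU, Upsilon_idealOf π' isClosed_closure.isOpen_compl,
      star_compl hc hcl hs hirr' hU hreg, Upsilon_idealOf π' hU,
      setAnn_idealOf (starSet_isOpen U)]
end

section
/- Let X be a compact Hausdorff space and let p : Ropen(X) → 2 be a homomorphism of Boolean algebras into the two-element Boolean algebra 2 = {0,1} (i.e., a lattice homomorphism sending ⊤ to 1 and ⊥ to 0). Then the family 𝒱_p = {cl(V) : V ∈ Ropen(X), p(V) = 1} has the finite intersection property (every finite subfamily has nonempty intersection), and the intersection ⋂ 𝒱_p is a singleton. -/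
open Set Topology

/-- The regular open subsets of a topological space, ordered by inclusion. -/
abbrev Ropen (Z : Type*) [TopologicalSpace Z] : Type _ :=
  {U : Set Z // U = interior (closure U)}

section Helpers

variable {Z : Type*} [TopologicalSpace Z]

lemma regOpen_idem (s : Set Z) :
    interior (closure s) = interior (closure (interior (closure s))) := by
  apply Set.Subset.antisymm
  · exact isOpen_interior.subset_interior_closure
  · exact interior_mono (closure_minimal interior_subset isClosed_closure)

lemma Ropen.isOpen (U : Ropen Z) : IsOpen (U : Set Z) := U.2 ▸ isOpen_interior

lemma regOpen_inter (U V : Ropen Z) :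
    (U : Set Z) ∩ (V : Set Z) = interior (closure ((U : Set Z) ∩ (V : Set Z))) := by
  apply Set.Subset.antisymm
  · exact (U.isOpen.inter V.isOpen).subset_interior_closure
  · intro x hx
    constructor
    · have : interior (closure ((U : Set Z) ∩ V)) ⊆ interior (closure (U : Set Z)) :=
        interior_mono (closure_mono inter_subset_left)
      exact U.2 ▸ this hx
    · have : interior (closure ((U : Set Z) ∩ V)) ⊆ interior (closure (V : Set Z)) :=
        interior_mono (closure_mono inter_subset_right)
      exact V.2 ▸ this hx

lemma open_disjoint_closure {s t : Set Z} (hs : IsOpen s) (h : s ∩ t = ∅) :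
    s ∩ closure t = ∅ := by
  have := hs.inter_closure (t := t)
  rw [h, closure_empty] at this
  exact subset_empty_iff.mp this

end Helpers

/-- Let `X` be a compact Hausdorff space and let `p : Ropen(X) → 2` be a Boolean algebra
homomorphism into the two-element Boolean algebra, i.e. a lattice homomorphism (meets are
intersections, joins are `int(cl(· ∪ ·))`) sending `⊤ = X` to `1` and `⊥ = ∅` to `0`.
Then the family `{cl V : V ∈ Ropen(X), p V = 1}` has the finite intersection property and
its total intersection is a singleton. -/
theorem stmt3 {X : Type*} [TopologicalSpace X] [CompactSpace X] [T2Space X]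
    (p : Ropen X → Bool)
    (hmeet : ∀ U V W : Ropen X, (W : Set X) = (U : Set X) ∩ (V : Set X) →
      p W = (p U && p V))
    (hjoin : ∀ U V W : Ropen X,
      (W : Set X) = interior (closure ((U : Set X) ∪ (V : Set X))) →
      p W = (p U || p V))
    (htop : ∀ U : Ropen X, (U : Set X) = Set.univ → p U = true)
    (hbot : ∀ U : Ropen X, (U : Set X) = ∅ → p U = false) :
    (∀ S : Finset (Ropen X), (∀ U ∈ S, p U = true) →
      (⋂ U ∈ S, closure (U : Set X)).Nonempty) ∧
    ∃ x : X, (⋂ (U : Ropen X) (_ : p U = true), closure (U : Set X)) = {x} := by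
  -- Finite meets exist and are true
  have key : ∀ S : Finset (Ropen X), (∀ U ∈ S, p U = true) →
      ∃ W : Ropen X, (W : Set X) = (⋂ U ∈ S, (U : Set X)) ∧ p W = true := by
    classical
    intro S
    induction S using Finset.induction_on with
    | empty =>
      intro _
      refine ⟨⟨Set.univ, by simp⟩, by simp, htop _ rfl⟩
    | @insert a S ha ih =>
      intro hS
      obtain ⟨W, hW, hWp⟩ := ih (fun U hU => hS U (Finset.mem_insert_of_mem hU))
      refine ⟨⟨(a : Set X) ∩ (W : Set X), regOpen_inter a W⟩, ?_, ?_⟩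
      · simp [hW, Finset.mem_insert]
      · rw [hmeet a W _ rfl, hWp, hS a (Finset.mem_insert_self a S), Bool.and_true]
  have fip : ∀ S : Finset (Ropen X), (∀ U ∈ S, p U = true) →
      (⋂ U ∈ S, closure (U : Set X)).Nonempty := by
    intro S hS
    obtain ⟨W, hW, hWp⟩ := key S hS
    have hWne : (W : Set X).Nonempty := by
      rcases eq_empty_or_nonempty (W : Set X) with h | h
      · rw [hbot W h] at hWp; exact absurd hWp (by simp)
      · exact h
    obtain ⟨x, hx⟩ := hWne
    refine ⟨x, ?_⟩
    simp only [mem_iInter]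
    intro U hU
    have : x ∈ ⋂ U ∈ S, (U : Set X) := hW ▸ hx
    exact subset_closure (by simpa using mem_iInter₂.mp this U hU)
  refine ⟨fip, ?_⟩
  -- Nonemptiness of the total intersection via compactness
  set I := ⋂ (U : Ropen X) (_ : p U = true), closure (U : Set X) with hI
  have hIne : I.Nonempty := by
    classical
    have h := IsCompact.inter_iInter_nonempty (t := fun U : {U : Ropen X // p U = true} =>
      closure ((U : Ropen X) : Set X)) isCompact_univ (fun U => isClosed_closure) ?_
    · obtain ⟨x, hx⟩ := h
      refine ⟨x, ?_⟩
      simp only [hI, mem_iInter]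
      intro U hU
      have := hx.2
      simp only [mem_iInter] at this
      exact this ⟨U, hU⟩
    · intro T
      obtain ⟨x, hx⟩ := fip (T.image Subtype.val) (fun U hU => by
        obtain ⟨V, _, rfl⟩ := Finset.mem_image.mp hU
        exact V.2)
      refine ⟨x, mem_univ x, ?_⟩
      simp only [mem_iInter] at hx ⊢
      intro V hV
      exact hx V (Finset.mem_image_of_mem Subtype.val hV)
  obtain ⟨x, hx⟩ := hIne
  refine ⟨x, ?_⟩
  apply Set.Subset.antisymm _ (singleton_subset_iff.mpr hx)
  intro y hy
  simp only [mem_singleton_iff]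
  by_contra hne
  -- Separate y and x
  obtain ⟨V, W', hVo, hWo, hyV, hxW, hVW⟩ := t2_separation hne
  set U : Ropen X := ⟨interior (closure V), regOpen_idem V⟩ with hUdef
  have hyU : y ∈ (U : Set X) := hVo.subset_interior_closure hyV
  have hclU : closure (U : Set X) ⊆ closure V :=
    closure_minimal (interior_subset.trans (closure_mono subset_rfl)) isClosed_closure
  set N : Ropen X := ⟨interior (closure (closure (U : Set X))ᶜ),
    regOpen_idem _⟩ with hNdef
  -- U ∩ N = ∅
  have hUN : (U : Set X) ∩ (N : Set X) = ∅ := by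
    have h1 : (U : Set X) ∩ (closure (U : Set X))ᶜ = ∅ := by
      rw [Set.eq_empty_iff_forall_notMem]
      rintro z ⟨hz1, hz2⟩
      exact hz2 (subset_closure hz1)
    have h2 : (U : Set X) ∩ closure (closure (U : Set X))ᶜ = ∅ :=
      open_disjoint_closure U.isOpen h1
    rw [Set.eq_empty_iff_forall_notMem]
    rintro z ⟨hz1, hz2⟩
    rw [Set.eq_empty_iff_forall_notMem] at h2
    exact h2 z ⟨hz1, interior_subset hz2⟩
  have hbotUN : false = (p U && p N) := by
    have := hmeet U N ⟨∅, by simp⟩ hUN.symm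
    rw [hbot ⟨∅, by simp⟩ rfl] at this
    exact this
  -- join is univ
  have hjoinUN : true = (p U || p N) := by
    have hcl : closure ((U : Set X) ∪ (N : Set X)) = univ := by
      apply Set.eq_univ_of_univ_subset
      intro z _
      by_cases hz : z ∈ closure (U : Set X)
      · exact closure_mono subset_union_left hz
      · have : z ∈ (N : Set X) := (isClosed_closure (s := (U : Set X))).isOpen_compl.subset_interior_closure hz
        exact subset_closure (Or.inr this)
    have := hjoin U N ⟨univ, by simp⟩
      (by change (univ : Set X) = _; rw [hcl, interior_univ])
    rw [htop ⟨univ, by simp⟩ rfl] at this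
    exact this
  -- case analysis
  cases hU : p U with
  | true =>
    -- x ∈ closure U, but x ∈ W' disjoint from closure V ⊇ closure U
    have hxcl : x ∈ closure (U : Set X) := by
      have := mem_iInter₂.mp hx U hU
      exact this
    have : x ∈ closure V := hclU hxcl
    have hWV : W' ∩ closure V = ∅ :=
      open_disjoint_closure hWo hVW.symm.inter_eq
    rw [Set.eq_empty_iff_forall_notMem] at hWV
    exact hWV x ⟨hxW, this⟩
  | false =>
    have hN : p N = true := by
      rw [hU] at hjoinUN; simpa using hjoinUN.symm
    -- y ∈ closure N, but y ∈ U open, disjoint from N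
    have hycl : y ∈ closure (N : Set X) := mem_iInter₂.mp hy N hN
    have h2 : (U : Set X) ∩ closure (N : Set X) = ∅ :=
      open_disjoint_closure U.isOpen hUN
    rw [Set.eq_empty_iff_forall_notMem] at h2
    exact h2 y ⟨hyU, hycl⟩
end

section
/- Let X and Y be compact Hausdorff spaces, let π : Y → X be an irreducible continuous surjection, and let α : C(X) → C(Y) be given by α(f) = f ∘ π. Then for every regular ideal K of C(Y), supp(α⁻¹(K)) = int(π(cl(supp(K)))). -/
open Set Topology

lemma mem_setAnn_iff {Y : Type*} [TopologicalSpace Y] (S : Set C(Y, ℂ)) (f : C(Y, ℂ)) :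
    f ∈ setAnn S ↔ ∀ y : Y, (∃ g ∈ S, g y ≠ 0) → f y = 0 := by
  constructor
  · rintro hf y ⟨g, hg, hgy⟩
    have h1 : f * g = 0 := hf g hg
    have h2 : f y * g y = 0 := by
      have := congrArg (fun h : C(Y, ℂ) => h y) h1
      simpa using this
    exact (mul_eq_zero.mp h2).resolve_right hgy
  · intro h g hg
    ext y
    simp only [ContinuousMap.mul_apply, ContinuousMap.zero_apply]
    by_cases hgy : g y = 0
    · rw [hgy, mul_zero]
    · rw [h y ⟨g, hg, hgy⟩, zero_mul]

lemma vanish_closure {Y : Type*} [TopologicalSpace Y] (f : C(Y, ℂ)) (s : Set Y)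
    (h : ∀ y ∈ s, f y = 0) : ∀ y ∈ closure s, f y = 0 := by
  have : Set.EqOn f (0 : C(Y, ℂ)) (closure s) :=
    Set.EqOn.closure (fun y hy => h y hy) f.continuous (map_continuous 0)
  intro y hy
  exact this hy

lemma mem_setAnn_ideal_iff {Y : Type*} [TopologicalSpace Y] (J : Ideal C(Y, ℂ)) (f : C(Y, ℂ)) :
    f ∈ setAnn (J : Set C(Y, ℂ)) ↔ ∀ y ∈ closure (suppIdeal J), f y = 0 := by
  rw [mem_setAnn_iff]
  constructor
  · intro h
    exact vanish_closure f _ (fun y hy => h y hy)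
  · intro h y hy
    exact h y (subset_closure hy)

lemma suppIdeal_eq_compl {Y : Type*} [TopologicalSpace Y] [CompactSpace Y] [T2Space Y]
    (J : Ideal C(Y, ℂ)) (C : Set Y) (hC : IsClosed C)
    (hJ : ∀ f : C(Y, ℂ), f ∈ J ↔ ∀ y ∈ C, f y = 0) :
    suppIdeal J = Cᶜ := by
  ext x
  simp only [suppIdeal, Set.mem_setOf_eq, Set.mem_compl_iff]
  constructor
  · rintro ⟨f, hf, hfx⟩ hx
    exact hfx ((hJ f).mp hf x hx)
  · intro hx
    obtain ⟨f, hf0, hf1, -⟩ := exists_continuous_zero_one_of_isClosed hC isClosed_singleton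
      (Set.disjoint_singleton_right.mpr hx)
    refine ⟨(ContinuousMap.mk Complex.ofReal Complex.continuous_ofReal).comp f, ?_, ?_⟩
    · rw [hJ]
      intro y hy
      have := hf0 hy
      simp only [ContinuousMap.comp_apply, ContinuousMap.coe_mk]
      simp [this]
    · have := hf1 (Set.mem_singleton x)
      simp only [ContinuousMap.comp_apply, ContinuousMap.coe_mk]
      simp [this]

/-- Let `π : Y → X` be an irreducible continuous surjection of compact Hausdorff spaces
and `α : C(X) → C(Y)`, `α(f) = f ∘ π`.  Then for every regular ideal `K` of `C(Y, ℂ)`,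
`supp(α⁻¹(K)) = int(π(cl(supp K)))`. -/
theorem stmt15 {X Y : Type*} [TopologicalSpace X] [CompactSpace X] [T2Space X]
    [TopologicalSpace Y] [CompactSpace Y] [T2Space Y]
    (π : Y → X) (hπc : Continuous π) (hπs : Function.Surjective π)
    (hirr : ∀ F : Set Y, IsClosed F → π '' F = Set.univ → F = Set.univ) :
    ∀ K : Ideal C(Y, ℂ), IsRegularIdeal K →
      suppIdeal (alphaPre ⟨π, hπc⟩ K) = interior (π '' closure (suppIdeal K)) := by
  intro K hreg
  set U := suppIdeal K with hU
  set V := interior (closure U) with hV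
  have hKmem : ∀ f : C(Y, ℂ), f ∈ K ↔ ∀ y ∈ Vᶜ, f y = 0 := by
    have h1 : suppIdeal (setAnn ((K : Set C(Y, ℂ)))) = (closure U)ᶜ :=
      suppIdeal_eq_compl _ _ isClosed_closure (fun f => mem_setAnn_ideal_iff K f)
    intro f
    rw [← hreg, mem_setAnn_ideal_iff, h1, closure_compl, ← hV]
  have hVcc : IsClosed (Vᶜ : Set Y) := isOpen_interior.isClosed_compl
  have hClosed : IsClosed (π '' Vᶜ) := (hVcc.isCompact.image hπc).isClosed
  have hPre : ∀ f : C(X, ℂ), f ∈ alphaPre ⟨π, hπc⟩ K ↔ ∀ x ∈ π '' Vᶜ, f x = 0 := by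
    intro f
    have h0 : f ∈ alphaPre ⟨π, hπc⟩ K ↔ f.comp ⟨π, hπc⟩ ∈ K := Iff.rfl
    rw [h0, hKmem, Set.forall_mem_image]
    exact Iff.rfl
  have hsupp : suppIdeal (alphaPre ⟨π, hπc⟩ K) = (π '' Vᶜ)ᶜ :=
    suppIdeal_eq_compl _ _ hClosed hPre
  rw [hsupp]
  apply Set.Subset.antisymm
  · refine interior_maximal ?_ hClosed.isOpen_compl
    intro x hx
    obtain ⟨y, hy⟩ := hπs x
    have hyV : y ∈ V := by
      by_contra h
      exact hx ⟨y, h, hy⟩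
    exact ⟨y, interior_subset hyV, hy⟩
  · intro x hx
    set W := interior (π '' closure U) with hW
    have hWV : π ⁻¹' W ⊆ V := by
      have h1 : π ⁻¹' W ⊆ closure U := by
        by_contra hcon
        rw [Set.not_subset] at hcon
        obtain ⟨z, hz1, hz2⟩ := hcon
        set O := π ⁻¹' W ∩ (closure U)ᶜ with hO
        have hOopen : IsOpen O := (isOpen_interior.preimage hπc).inter isClosed_closure.isOpen_compl
        have hOne : O.Nonempty := ⟨z, hz1, hz2⟩
        have hF : Oᶜ ≠ Set.univ := by
          intro h
          obtain ⟨w, hw⟩ := hOne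
          exact (h ▸ Set.mem_univ w : w ∈ Oᶜ) hw
        have himg : π '' Oᶜ ≠ Set.univ := fun h => hF (hirr _ hOopen.isClosed_compl h)
        obtain ⟨x', hx'⟩ := (Set.ne_univ_iff_exists_notMem _).mp himg
        obtain ⟨y', hy'⟩ := hπs x'
        have hy'O : y' ∈ O := by
          by_contra h
          exact hx' ⟨y', h, hy'⟩
        have hx'W : x' ∈ W := hy' ▸ hy'O.1
        obtain ⟨w, hwU, hwx⟩ := interior_subset hx'W
        have hwO : w ∈ O := by
          by_contra h
          exact hx' ⟨w, h, hwx⟩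
        exact hwO.2 hwU
      exact interior_maximal h1 (isOpen_interior.preimage hπc)
    intro hmem
    obtain ⟨y, hyV, hyx⟩ := hmem
    exact hyV (hWV (show π y ∈ W by rw [hyx]; exact hx))
end

section
/- Let X and Y be compact Hausdorff spaces with projective covers (P_X, f_X) and (P_Y, f_Y) respectively. Then the following are equivalent: (a) there exists a Boolean algebra isomorphism (equivalently, an order isomorphism) between Ropen(X) and Ropen(Y); (b) P_X and P_Y are homeomorphic; (c) there exist a compact Hausdorff space Z and irreducible continuous surjections f : Z → X and g : Z → Y. -/
open Set Topology

set_option linter.unusedSectionVars false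
set_option maxHeartbeats 1000000

section Irr
variable {P X : Type*} [TopologicalSpace P] [TopologicalSpace X]
variable {f : P → X} (hc : Continuous f) (hs : Function.Surjective f)
  (hcl : IsClosedMap f)
  (hirr : ∀ F : Set P, IsClosed F → f '' F = Set.univ → F = Set.univ)

/-- `sharp f V = X \ f(P \ V)`. -/
def sharp (f : P → X) (V : Set P) : Set X := (f '' Vᶜ)ᶜ

include hcl in
lemma sharp_open_s16 {V : Set P} (hV : IsOpen V) : IsOpen (sharp f V) :=
  (hcl _ hV.isClosed_compl).isOpen_compl

lemma preimage_sharp_subset_s16 (V : Set P) : f ⁻¹' (sharp f V) ⊆ V := by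
  intro p hp
  by_contra hpv
  exact hp (mem_image_of_mem f hpv)

lemma mem_sharp_iff {x : X} {V : Set P} : x ∈ sharp f V ↔ f ⁻¹' {x} ⊆ V := by
  constructor
  · intro hx p hp
    by_contra hpv
    exact hx ⟨p, hpv, hp⟩
  · rintro h ⟨p, hpv, rfl⟩
    exact hpv (h rfl)

include hirr in
lemma sharp_nonempty_s16 {V : Set P} (hVo : IsOpen V) (hV : V.Nonempty) :
    (sharp f V).Nonempty := by
  rw [nonempty_iff_ne_empty]
  intro h
  have h2 : f '' Vᶜ = univ := by
    have := congrArg compl h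
    simpa [sharp, compl_empty] using this
  have := hirr Vᶜ hVo.isClosed_compl h2
  obtain ⟨p, hp⟩ := hV
  exact (this ▸ mem_univ p : p ∈ Vᶜ) hp

include hs hirr in
/-- Lemma A: `f ⁻¹' (sharp f V)` is dense in `V` for open `V`. -/
lemma subset_closure_preimage_sharp {V : Set P} (hVo : IsOpen V) :
    V ⊆ closure (f ⁻¹' (sharp f V)) := by
  by_contra h
  rw [not_subset] at h
  obtain ⟨p, hpV, hpc⟩ := h
  set W := V ∩ (closure (f ⁻¹' (sharp f V)))ᶜ with hW
  have hWo : IsOpen W := hVo.inter isClosed_closure.isOpen_compl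
  have hWne : W.Nonempty := ⟨p, hpV, hpc⟩
  obtain ⟨x, hx⟩ := sharp_nonempty_s16 hirr hWo hWne
  have hfib : f ⁻¹' {x} ⊆ W := mem_sharp_iff.mp hx
  obtain ⟨q, hq⟩ := hs x
  have hqW : q ∈ W := hfib hq
  have hqsharp : q ∈ f ⁻¹' (sharp f V) := by
    rw [mem_preimage, hq, mem_sharp_iff]
    exact hfib.trans inter_subset_left
  exact hqW.2 (subset_closure hqsharp)

include hc hs hcl hirr in
/-- key closure computation: `closure (f⁻¹ (int cl (sharp f V))) = closure V` for open `V`. -/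
lemma closure_preimage_intCl_sharp {V : Set P} (hVo : IsOpen V) :
    closure (f ⁻¹' (interior (closure (sharp f V)))) = closure V := by
  set S := sharp f V with hS
  have hSo : IsOpen S := sharp_open_s16 hcl hVo
  apply subset_antisymm
  · -- f ⁻¹' (int cl S) ⊆ closure V
    apply closure_minimal _ isClosed_closure
    intro p hp
    by_contra hpc
    set W := (closure V)ᶜ with hWdef
    have hWo : IsOpen W := isClosed_closure.isOpen_compl
    have hpW : p ∈ W := hpc
    set T := sharp f W with hT
    have hTo : IsOpen T := sharp_open_s16 hcl hWo
    have hTS : T ∩ S = ∅ := by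
      rw [eq_empty_iff_forall_notMem]
      rintro x ⟨hxT, hxS⟩
      obtain ⟨q, hq⟩ := hs x
      have h1 : q ∈ W := mem_sharp_iff.mp hxT hq
      have h2 : q ∈ V := mem_sharp_iff.mp hxS hq
      exact h1 (subset_closure h2)
    have hdTS : Disjoint T (closure S) :=
      (disjoint_iff_inter_eq_empty.mpr hTS).closure_right hTo
    have hpclT : f p ∈ closure T := by
      have h1 : p ∈ closure (f ⁻¹' T) := subset_closure_preimage_sharp hs hirr hWo hpW
      have h2 := image_closure_subset_closure_image hc (s := f ⁻¹' T)
      have h3 : f p ∈ f '' closure (f ⁻¹' T) := mem_image_of_mem f h1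
      have h4 := h2 h3
      exact closure_mono (image_preimage_subset f T) h4
    have hd2 : Disjoint (interior (closure S)) (closure T) :=
      ((hdTS.mono_right interior_subset).symm.closure_right isOpen_interior)
    exact (hd2.ne_of_mem hp hpclT) rfl
  · -- closure V ⊆ closure (f⁻¹ int cl S)
    have h1 : V ⊆ closure (f ⁻¹' S) := subset_closure_preimage_sharp hs hirr hVo
    have h2 : f ⁻¹' S ⊆ f ⁻¹' (interior (closure S)) :=
      preimage_mono (hSo.subset_interior_iff.mpr subset_closure)
    calc closure V ⊆ closure (closure (f ⁻¹' S)) := closure_mono h1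
      _ = closure (f ⁻¹' S) := closure_closure
      _ ⊆ closure (f ⁻¹' (interior (closure S))) := closure_mono h2
end Irr

section IrrIso
variable {P X : Type*} [TopologicalSpace P] [TopologicalSpace X]
variable {f : P → X} (hc : Continuous f) (hs : Function.Surjective f)
  (hcl : IsClosedMap f)
  (hirr : ∀ F : Set P, IsClosed F → f '' F = Set.univ → F = Set.univ)

lemma regOpen_intCl' (s : Set X) :
    interior (closure (interior (closure s))) = interior (closure s) := by
  apply subset_antisymm
  · exact interior_mono ((closure_mono interior_subset).trans (by rw [closure_closure]))
  · exact isOpen_interior.subset_interior_iff.mpr subset_closure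

include hc hs in
lemma phi_reflect {U U' : Set X} (hU : U = interior (closure U))
    (hU' : U' = interior (closure U'))
    (h : interior (closure (f ⁻¹' U)) ⊆ interior (closure (f ⁻¹' U'))) : U ⊆ U' := by
  have hUo : IsOpen U := hU ▸ isOpen_interior
  have h1 : f ⁻¹' U ⊆ closure (f ⁻¹' U') := by
    refine Subset.trans ?_ (h.trans interior_subset)
    exact (hUo.preimage hc).subset_interior_iff.mpr subset_closure
  have h2 : closure (f ⁻¹' U') ⊆ f ⁻¹' (closure U') := hc.closure_preimage_subset U'
  have h3 : U ⊆ closure U' := by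
    intro x hx
    obtain ⟨p, rfl⟩ := hs x
    exact h2 (h1 hx)
  calc U = interior (closure U) := hU
    _ ⊆ interior (closure (closure U')) := interior_mono (closure_mono h3)
    _ = interior (closure U') := by rw [closure_closure]
    _ = U' := hU'.symm

include hc hs hcl hirr in
/-- The order isomorphism `Ropen X ≃o Ropen P` induced by an irreducible map. -/
noncomputable def irrRopenIso : Ropen X ≃o Ropen P := by
  classical
  let φ : Ropen X → Ropen P := fun U => ⟨interior (closure (f ⁻¹' U.1)),
    (regOpen_intCl' _).symm⟩
  let ψ : Ropen P → Ropen X := fun V => ⟨interior (closure (sharp f V.1)),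
    (regOpen_intCl' _).symm⟩
  have hri : ∀ V : Ropen P, φ (ψ V) = V := by
    intro V
    apply Subtype.ext
    show interior (closure (f ⁻¹' (interior (closure (sharp f V.1))))) = V.1
    rw [closure_preimage_intCl_sharp hc hs hcl hirr (V.2 ▸ isOpen_interior), ← V.2]
  have hrefl : ∀ U U' : Ropen X, φ U ≤ φ U' ↔ U ≤ U' := by
    intro U U'
    constructor
    · intro h
      exact phi_reflect hc hs U.2 U'.2 h
    · intro h
      exact interior_mono (closure_mono (preimage_mono h))
  have hinj : Function.Injective φ := by
    intro U U' h
    exact le_antisymm ((hrefl U U').mp h.le) ((hrefl U' U).mp h.ge)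
  have hli : ∀ U : Ropen X, ψ (φ U) = U := by
    intro U
    apply hinj
    exact hri (φ U)
  exact ⟨⟨φ, ψ, hli, hri⟩, hrefl _ _⟩

section EDbasic
variable {P : Type*} [TopologicalSpace P]

lemma Ropen.le_iff {U V : Ropen P} : U ≤ V ↔ U.1 ⊆ V.1 := Iff.rfl

lemma isClopen_of_regOpen [ExtremallyDisconnected P] {U : Set P}
    (h : U = interior (closure U)) : IsClopen U := by
  have hUo : IsOpen U := h ▸ isOpen_interior
  have hco : IsOpen (closure U) := ExtremallyDisconnected.open_closure U hUo
  have : U = closure U := by nth_rewrite 1 [h]; rw [hco.interior_eq]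
  refine ⟨?_, hUo⟩
  rw [this]
  exact isClosed_closure

lemma IsClopen.regOpen {U : Set P} (h : IsClopen U) : U = interior (closure U) := by
  rw [h.isClosed.closure_eq, h.isOpen.interior_eq]

/-- In a T2 space, distinct points of an extremally disconnected space are separated
by a clopen set. -/
lemma exists_clopen_sep [ExtremallyDisconnected P] [T2Space P] {x y : P} (h : x ≠ y) :
    ∃ U : Set P, IsClopen U ∧ x ∈ U ∧ y ∉ U := by
  obtain ⟨u, v, hu, hv, hxu, hyv, huv⟩ := t2_separation h
  refine ⟨closure u, ⟨isClosed_closure, ExtremallyDisconnected.open_closure u hu⟩,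
    subset_closure hxu, ?_⟩
  intro hy
  exact ((huv.closure_left hv).ne_of_mem hy hyv) rfl

/-- Clopen sets form a neighborhood basis in a compact T2 ED space. -/
lemma exists_clopen_nhd [ExtremallyDisconnected P] [CompactSpace P] [T2Space P]
    {x : P} {O : Set P} (hO : IsOpen O) (hx : x ∈ O) :
    ∃ K : Set P, IsClopen K ∧ x ∈ K ∧ K ⊆ O := by
  obtain ⟨C, hC, hCc, hCO⟩ := exists_mem_nhds_isClosed_subset (hO.mem_nhds hx)
  refine ⟨closure (interior C),
    ⟨isClosed_closure, ExtremallyDisconnected.open_closure _ isOpen_interior⟩,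
    subset_closure (mem_interior_iff_mem_nhds.mpr hC), ?_⟩
  calc closure (interior C) ⊆ closure C := closure_mono interior_subset
    _ = C := hCc.closure_eq
    _ ⊆ O := hCO
end EDbasic

section Misc
variable {Z : Type*} [TopologicalSpace Z]

lemma inter_regOpen {U V : Set Z} (hU : U = interior (closure U))
    (hV : V = interior (closure V)) : U ∩ V = interior (closure (U ∩ V)) := by
  apply subset_antisymm
  · exact ((hU ▸ isOpen_interior : IsOpen U).inter
      (hV ▸ isOpen_interior : IsOpen V)).subset_interior_iff.mpr subset_closure
  · intro x hx
    refine ⟨?_, ?_⟩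
    · rw [hU]; exact interior_mono (closure_mono inter_subset_left) hx
    · rw [hV]; exact interior_mono (closure_mono inter_subset_right) hx
end Misc

section Stone
variable {P Q : Type*} [TopologicalSpace P] [TopologicalSpace Q]

/-- canonical empty regular open -/
def rbot (Z : Type*) [TopologicalSpace Z] : Ropen Z := ⟨∅, by simp⟩

lemma orderIso_bot (e : Ropen P ≃o Ropen Q) : e (rbot P) = rbot Q := by
  have h1 : (rbot P : Ropen P) ≤ e.symm (rbot Q) := fun x hx => absurd hx (by simp [rbot])
  have h2 := e.monotone h1
  rw [e.apply_symm_apply] at h2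
  exact le_antisymm h2 (fun x hx => absurd hx (by simp [rbot]))

lemma orderIso_ne_bot (e : Ropen P ≃o Ropen Q) {U : Ropen P} (h : U.1.Nonempty) :
    (e U).1.Nonempty := by
  rw [nonempty_iff_ne_empty]
  intro hc
  have : e U = rbot Q := Subtype.ext hc
  have := e.injective (this.trans (orderIso_bot e).symm)
  obtain ⟨x, hx⟩ := h
  rw [this] at hx
  exact absurd hx (by simp [rbot])

/-- the meet of two regular opens, as intersection -/
def rinf (U V : Ropen P) : Ropen P := ⟨U.1 ∩ V.1, inter_regOpen U.2 V.2⟩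

lemma orderIso_inf (e : Ropen P ≃o Ropen Q) (U V : Ropen P) :
    (e (rinf U V)).1 = (e U).1 ∩ (e V).1 := by
  apply subset_antisymm
  · exact subset_inter (e.monotone (fun x hx => hx.1)) (e.monotone (fun x hx => hx.2))
  · set W : Ropen Q := ⟨(e U).1 ∩ (e V).1, inter_regOpen (e U).2 (e V).2⟩ with hW
    have h1 : e.symm W ≤ U := by
      have : W ≤ e U := fun x hx => hx.1
      have := e.symm.monotone this
      rwa [e.symm_apply_apply] at this
    have h2 : e.symm W ≤ V := by
      have : W ≤ e V := fun x hx => hx.2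
      have := e.symm.monotone this
      rwa [e.symm_apply_apply] at this
    have h3 : e.symm W ≤ rinf U V := fun x hx => ⟨h1 hx, h2 hx⟩
    have h4 := e.monotone h3
    rw [e.apply_symm_apply] at h4
    exact h4

variable [CompactSpace P] [T2Space P] [ExtremallyDisconnected P]
variable [CompactSpace Q] [T2Space Q] [ExtremallyDisconnected Q]

lemma symm_union_univ (e : Ropen P ≃o Ropen Q) {V : Set Q} (hV : IsClopen V) :
    (e.symm ⟨V, hV.regOpen⟩).1 ∪ (e.symm ⟨Vᶜ, hV.compl.regOpen⟩).1 = univ := by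
  set A := e.symm ⟨V, hV.regOpen⟩ with hA
  set B := e.symm ⟨Vᶜ, hV.compl.regOpen⟩ with hB
  by_contra h
  have hAc : IsClopen A.1 := isClopen_of_regOpen A.2
  have hBc : IsClopen B.1 := isClopen_of_regOpen B.2
  set C : Set P := (A.1 ∪ B.1)ᶜ with hC
  have hCc : IsClopen C := (hAc.union hBc).compl
  have hCne : C.Nonempty := by
    rw [nonempty_iff_ne_empty]
    intro h0
    exact h (by rw [← compl_empty_iff, ← hC, h0])
  set cC : Ropen P := ⟨C, hCc.regOpen⟩ with hcC
  have hCA : rinf cC A = rbot P := by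
    apply Subtype.ext
    show C ∩ A.1 = ∅
    rw [eq_empty_iff_forall_notMem]
    rintro x ⟨hx1, hx2⟩
    exact hx1 (Or.inl hx2)
  have hCB : rinf cC B = rbot P := by
    apply Subtype.ext
    show C ∩ B.1 = ∅
    rw [eq_empty_iff_forall_notMem]
    rintro x ⟨hx1, hx2⟩
    exact hx1 (Or.inr hx2)
  have h1 : (e cC).1 ∩ V = ∅ := by
    have := orderIso_inf e cC A
    rw [hCA, orderIso_bot e] at this
    rw [hA] at this
    rw [e.apply_symm_apply] at this
    exact this.symm
  have h2 : (e cC).1 ∩ Vᶜ = ∅ := by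
    have := orderIso_inf e cC B
    rw [hCB, orderIso_bot e] at this
    rw [hB] at this
    rw [e.apply_symm_apply] at this
    exact this.symm
  have h3 : (e cC).1 = ∅ := by
    have : (e cC).1 = ((e cC).1 ∩ V) ∪ ((e cC).1 ∩ Vᶜ) := by
      rw [← inter_union_distrib_left, union_compl_self, inter_univ]
    rw [this, h1, h2, union_empty]
  have h4 : cC = rbot P := e.injective (by
    apply Subtype.ext
    rw [orderIso_bot e]
    exact h3)
  obtain ⟨x, hx⟩ := hCne
  have : x ∈ (rbot P).1 := h4 ▸ hx
  exact absurd this (by simp [rbot])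


lemma stone_exists_unique (e : Ropen P ≃o Ropen Q) (x : P) :
    ∃! y : Q, ∀ U : Ropen P, x ∈ U.1 → y ∈ (e U).1 := by
  have hex : ∃ y : Q, ∀ U : Ropen P, x ∈ U.1 → y ∈ (e U).1 := by
    have hne : Nonempty {U : Ropen P // x ∈ U.1} := ⟨⟨⟨univ, by simp⟩, mem_univ x⟩⟩
    set t : {U : Ropen P // x ∈ U.1} → Set Q := fun i => (e i.1).1 with ht
    have hdir : Directed (· ⊇ ·) t := by
      intro i j
      refine ⟨⟨rinf i.1 j.1, ⟨i.2, j.2⟩⟩, ?_, ?_⟩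
      · show t _ ⊆ t i
        rw [ht]; simp only
        rw [orderIso_inf e]
        exact inter_subset_left
      · show t _ ⊆ t j
        rw [ht]; simp only
        rw [orderIso_inf e]
        exact inter_subset_right
    have hnon : ∀ i, (t i).Nonempty := fun i => orderIso_ne_bot e ⟨x, i.2⟩
    have hclo : ∀ i, IsClosed (t i) := fun i => (isClopen_of_regOpen (e i.1).2).isClosed
    have hcpt : ∀ i, IsCompact (t i) := fun i => (hclo i).isCompact
    obtain ⟨y, hy⟩ :=
      IsCompact.nonempty_iInter_of_directed_nonempty_isCompact_isClosed t hdir hnon hcpt hclo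
    exact ⟨y, fun U hU => (mem_iInter.mp hy) ⟨U, hU⟩⟩
  obtain ⟨y, hy⟩ := hex
  refine ⟨y, hy, ?_⟩
  intro y' hy'
  by_contra hne
  obtain ⟨V, hV, hy'V, hyV⟩ := exists_clopen_sep hne
  set A := e.symm ⟨V, hV.regOpen⟩ with hA
  set B := e.symm ⟨Vᶜ, hV.compl.regOpen⟩ with hB
  have hxu : x ∈ A.1 ∪ B.1 := by rw [symm_union_univ e hV]; exact mem_univ x
  rcases hxu with hxA | hxB
  · have := hy A hxA
    rw [hA, e.apply_symm_apply] at this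
    exact hyV this
  · have := hy' B hxB
    rw [hB, e.apply_symm_apply] at this
    exact this hy'V

/-- The point map induced by an order isomorphism of regular open algebras. -/
noncomputable def stoneMap (e : Ropen P ≃o Ropen Q) : P → Q :=
  fun x => (stone_exists_unique e x).exists.choose

lemma stoneMap_spec (e : Ropen P ≃o Ropen Q) (x : P) (U : Ropen P) :
    x ∈ U.1 ↔ stoneMap e x ∈ (e U).1 := by
  constructor
  · intro h
    exact (stone_exists_unique e x).exists.choose_spec U h
  · intro h
    by_contra hx
    have hUc : IsClopen U.1 := isClopen_of_regOpen U.2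
    set Uc : Ropen P := ⟨U.1ᶜ, hUc.compl.regOpen⟩ with hUcdef
    have h1 : stoneMap e x ∈ (e Uc).1 :=
      (stone_exists_unique e x).exists.choose_spec Uc hx
    have h2 : rinf Uc U = rbot P := by
      apply Subtype.ext
      show U.1ᶜ ∩ U.1 = ∅
      simp
    have h3 := orderIso_inf e Uc U
    rw [h2, orderIso_bot e] at h3
    have : stoneMap e x ∈ (rbot Q).1 := h3 ▸ mem_inter h1 h
    exact absurd this (by simp [rbot])

lemma stoneMap_continuous (e : Ropen P ≃o Ropen Q) : Continuous (stoneMap e) := by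
  rw [continuous_def]
  intro O hO
  rw [isOpen_iff_forall_mem_open]
  intro x hx
  obtain ⟨K, hK, hxK, hKO⟩ := exists_clopen_nhd hO hx
  set U := e.symm ⟨K, hK.regOpen⟩ with hU
  have heU : (e U).1 = K := by rw [hU, e.apply_symm_apply]
  refine ⟨U.1, ?_, U.2 ▸ isOpen_interior, ?_⟩
  · intro x' hx'
    have := (stoneMap_spec e x' U).mp hx'
    rw [heU] at this
    exact hKO this
  · rw [stoneMap_spec e x U, heU]
    exact hxK

lemma stoneMap_leftInv (e : Ropen P ≃o Ropen Q) (x : P) :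
    stoneMap e.symm (stoneMap e x) = x := by
  by_contra hne
  obtain ⟨V, hV, hxV, hV2⟩ := exists_clopen_sep (Ne.symm hne)
  -- hxV : x ∈ V, hV2 : stoneMap e.symm (stoneMap e x) ∉ V
  set U : Ropen P := ⟨V, hV.regOpen⟩ with hUdef
  have h1 : stoneMap e x ∈ (e U).1 := (stoneMap_spec e x U).mp hxV
  have h2 := (stoneMap_spec e.symm (stoneMap e x) (e U)).mp h1
  rw [e.symm_apply_apply] at h2
  exact hV2 h2

noncomputable def stoneHomeo (e : Ropen P ≃o Ropen Q) : P ≃ₜ Q where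
  toFun := stoneMap e
  invFun := stoneMap e.symm
  left_inv := stoneMap_leftInv e
  right_inv := by
    intro y
    have := stoneMap_leftInv e.symm y
    rwa [e.symm_symm] at this
  continuous_toFun := stoneMap_continuous e
  continuous_invFun := stoneMap_continuous e.symm

end Stone

/-- A homeomorphism induces an order isomorphism of regular open algebras. -/
def homeoRopenIso {S T : Type*} [TopologicalSpace S] [TopologicalSpace T]
    (h : S ≃ₜ T) : Ropen S ≃o Ropen T where
  toFun U := ⟨h '' U.1, by
    calc h '' U.1 = h '' (interior (closure U.1)) := by rw [← U.2]
      _ = interior (closure (h '' U.1)) := by rw [h.image_interior, h.image_closure]⟩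
  invFun V := ⟨h.symm '' V.1, by
    calc h.symm '' V.1 = h.symm '' (interior (closure V.1)) := by rw [← V.2]
      _ = interior (closure (h.symm '' V.1)) := by
          rw [h.symm.image_interior, h.symm.image_closure]⟩
  left_inv U := Subtype.ext (by show h.symm '' (h '' U.1) = U.1; rw [← image_comp]; simp)
  right_inv V := Subtype.ext (by show h '' (h.symm '' V.1) = V.1; rw [← image_comp]; simp)
  map_rel_iff' {U V} := by
    show h '' U.1 ⊆ h '' V.1 ↔ U.1 ⊆ V.1
    exact image_subset_image_iff h.injective

/-- Let `X` and `Y` be compact Hausdorff spaces with projective covers `(P_X, f_X)` and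
`(P_Y, f_Y)`.  The following are equivalent: (a) `Ropen(X)` and `Ropen(Y)` are
isomorphic Boolean algebras (equivalently, order isomorphic); (b) `P_X` and `P_Y` are
homeomorphic; (c) there are a compact Hausdorff space `Z` and irreducible continuous
surjections `Z → X` and `Z → Y`. -/
theorem stmt16 {X Y : Type u} [TopologicalSpace X] [CompactSpace X] [T2Space X]
    [TopologicalSpace Y] [CompactSpace Y] [T2Space Y]
    (PX PY : Type u) [TopologicalSpace PX] [CompactSpace PX] [T2Space PX]
    [ExtremallyDisconnected PX] [TopologicalSpace PY] [CompactSpace PY] [T2Space PY]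
    [ExtremallyDisconnected PY]
    (fX : PX → X) (hfXc : Continuous fX) (hfXs : Function.Surjective fX)
    (hfXirr : ∀ F : Set PX, IsClosed F → fX '' F = Set.univ → F = Set.univ)
    (fY : PY → Y) (hfYc : Continuous fY) (hfYs : Function.Surjective fY)
    (hfYirr : ∀ F : Set PY, IsClosed F → fY '' F = Set.univ → F = Set.univ) :
    ((Nonempty (Ropen X ≃o Ropen Y) ↔ Nonempty (PX ≃ₜ PY)) ∧
     (Nonempty (PX ≃ₜ PY) ↔
       ∃ (Z : Type u) (_ : TopologicalSpace Z), CompactSpace Z ∧ T2Space Z ∧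
         ∃ (f : Z → X) (g : Z → Y),
           Continuous f ∧ Function.Surjective f ∧
           (∀ F : Set Z, IsClosed F → f '' F = Set.univ → F = Set.univ) ∧
           Continuous g ∧ Function.Surjective g ∧
           (∀ F : Set Z, IsClosed F → g '' F = Set.univ → F = Set.univ))) := by
  have isoX : Ropen X ≃o Ropen PX := irrRopenIso hfXc hfXs hfXc.isClosedMap hfXirr
  have isoY : Ropen Y ≃o Ropen PY := irrRopenIso hfYc hfYs hfYc.isClosedMap hfYirr
  constructor
  · constructor
    · rintro ⟨e⟩
      exact ⟨stoneHomeo ((isoX.symm.trans e).trans isoY)⟩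
    · rintro ⟨h⟩
      exact ⟨(isoX.trans (homeoRopenIso h)).trans isoY.symm⟩
  · constructor
    · rintro ⟨h⟩
      refine ⟨PX, inferInstance, inferInstance, inferInstance, fX, fY ∘ h, hfXc, hfXs, hfXirr,
        hfYc.comp h.continuous, hfYs.comp h.surjective, ?_⟩
      intro F hF hIm
      have h1 : IsClosed (h '' F) := h.isClosedMap F hF
      have h2 : fY '' (h '' F) = univ := by rw [← image_comp]; exact hIm
      have h3 := hfYirr _ h1 h2
      have h4 : F = h ⁻¹' (h '' F) := (h.injective.preimage_image F).symm
      rw [h3, preimage_univ] at h4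
      exact h4
    · rintro ⟨Z, tZ, cZ, t2Z, f, g, hfc, hfs, hfirr, hgc, hgs, hgirr⟩
      obtain ⟨ρ, hρc, hρcomm⟩ :=
        CompactT2.ExtremallyDisconnected.projective (A := PX) hfXc hfc hfs
      have hρs : Function.Surjective ρ := by
        rw [← Set.range_eq_univ]
        apply hfirr
        · exact (isCompact_range hρc).isClosed
        · rw [← Set.range_comp, hρcomm, Set.range_eq_univ.mpr hfXs]
      have hρirr : ∀ F : Set PX, IsClosed F → ρ '' F = Set.univ → F = Set.univ := by
        intro F hF hIm
        apply hfXirr F hF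
        rw [← hρcomm, image_comp, hIm, image_univ, Set.range_eq_univ.mpr hfs]
      have hkc : Continuous (g ∘ ρ) := hgc.comp hρc
      have hks : Function.Surjective (g ∘ ρ) := hgs.comp hρs
      have hkirr : ∀ F : Set PX, IsClosed F → (g ∘ ρ) '' F = Set.univ → F = Set.univ := by
        intro F hF hIm
        apply hρirr F hF
        apply hgirr
        · exact (hF.isCompact.image hρc).isClosed
        · rw [← image_comp]; exact hIm
      obtain ⟨ψ, hψc, hψcomm⟩ :=
        CompactT2.ExtremallyDisconnected.projective (A := PX) hkc hfYc hfYs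
      have hψs : Function.Surjective ψ := by
        rw [← Set.range_eq_univ]
        apply hfYirr
        · exact (isCompact_range hψc).isClosed
        · rw [← Set.range_comp, hψcomm, Set.range_eq_univ.mpr hks]
      have hzorn : ∀ E₀ : Set PX, E₀ ≠ univ → IsClosed E₀ → ψ '' E₀ ≠ univ := by
        intro E₀ hne hcl heq
        apply hne
        apply hkirr E₀ hcl
        rw [← hψcomm, image_comp, heq, image_univ, Set.range_eq_univ.mpr hfYs]
      exact ⟨ExtremallyDisconnected.homeoCompactToT2 hψc hψs hzorn⟩
end IrrIso
end
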